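/- Let d be prime and n ≥ 2. Define the game matrix Φ_k (for k ∈ {1,…,d−1}) as the d × d^{n−1} matrix with entries Φ_k[x₁; (x₂,…,x_n)] = (1/d^n) · ζ^{k · Σ_{i<j} x_i x_j}, where ζ = e^{2πi/d} and x_i range over ℤ_d. Then Φ_k Φ_k† = (1/d^{n+1}) I_d, and hence the maximum singular value of Φ_k equals 1/√(d^{n+1}). -/

import Mathlib

open Matrix Finset

/-- `ζ^a` where `ζ = e^{2πi/d}` and `a ∈ ℤ_d`. -/
noncomputable def zetaPow (d : ℕ) (a : ZMod d) : ℂ :=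
  Complex.exp (2 * Real.pi * Complex.I * (a.val : ℂ) / (d : ℂ))

/-- The operator norm (maximum singular value) of a complex matrix. -/
noncomputable def matOpNorm {m n : Type*} [Fintype m] [Fintype n] [DecidableEq n]
    (A : Matrix m n ℂ) : ℝ :=
  ‖LinearMap.toContinuousLinearMap (Matrix.toEuclideanLin A)‖

/-- The `d × d^{n-1}` game matrix of the `n`-party CHSH-`d` game:
`Φ_k[x₁; (x₂,…,x_n)] = (1/d^n)·ζ^{k·Σ_{i<j} x_i x_j}`. -/
noncomputable def PhiCHSH (d n : ℕ) [NeZero d] (k : ZMod d) :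
    Matrix (ZMod d) (Fin (n - 1) → ZMod d) ℂ :=
  Matrix.of fun x v =>
    let xs : Fin n → ZMod d := fun i =>
      if h : (i : ℕ) = 0 then x else v ⟨(i : ℕ) - 1, by have := i.isLt; omega⟩
    ((1 : ℂ) / (d : ℂ) ^ n) *
      zetaPow d (k * ∑ i : Fin n, ∑ j : Fin n, if i < j then xs i * xs j else 0)

/-!
Let `ψ` be the standard additive character of `ℤ_d`, so `ζ^a = ψ a`. Splitting off the first
coordinate, `Φ_k[x; v] = d⁻ⁿ ψ(k (x Σₜ vₜ + q v))` with `q v = Σ_{i<j} vᵢ vⱼ`. In `Φ_k Φ_k†` the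
terms `q v` cancel, and the `(x, y)` entry becomes
`d⁻²ⁿ Σ_v ψ(k (x - y) Σₜ vₜ) = d⁻²ⁿ (Σ_a ψ(a k (x - y)))ⁿ⁻¹`.
As `ℤ_d` is a field, `k (x - y) ≠ 0` for `x ≠ y`, and orthogonality of characters leaves
`d⁻²ⁿ dⁿ⁻¹ = d⁻⁽ⁿ⁺¹⁾` on the diagonal and `0` off it. The norm follows from the C⋆-identity
`‖A‖² = ‖A A†‖`.
-/

section L2OpNorm

open scoped Matrix.Norms.L2Operator

theorem matOpNorm_eq_l2_opNorm {m n : Type*} [Fintype m] [Fintype n] [DecidableEq n]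
    (A : Matrix m n ℂ) : matOpNorm A = ‖A‖ := rfl

theorem matOpNorm_eq_sqrt_of_mul_conjTranspose_eq_smul_one {m n : Type*} [Fintype m]
    [Fintype n] [DecidableEq m] [DecidableEq n] [Nonempty m] (A : Matrix m n ℂ) {c : ℝ}
    (hc : 0 ≤ c) (h : A * Aᴴ = (c : ℂ) • 1) : matOpNorm A = √c := by
  have hsq : ‖A‖ * ‖A‖ = c := by
    rw [← l2_opNorm_conjTranspose, ← l2_opNorm_conjTranspose_mul_self, conjTranspose_conjTranspose,
      h, norm_smul, norm_one, mul_one, Complex.norm_real, Real.norm_of_nonneg hc]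
  rw [matOpNorm_eq_l2_opNorm, ← hsq, Real.sqrt_mul_self (norm_nonneg A)]

end L2OpNorm

theorem zetaPow_eq_stdAddChar (d : ℕ) [NeZero d] (a : ZMod d) :
    zetaPow d a = ZMod.stdAddChar a := by
  rw [ZMod.stdAddChar_apply, ZMod.toCircle_apply, zetaPow]

theorem AddChar.map_sum_eq_prod {A M ι : Type*} [AddCommMonoid A] [CommMonoid M]
    (ψ : AddChar A M) (s : Finset ι) (f : ι → A) :
    ψ (∑ i ∈ s, f i) = ∏ i ∈ s, ψ (f i) :=
  map_prod ψ.toMonoidHom (fun i => Multiplicative.ofAdd (f i)) s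

theorem AddChar.sum_pi_apply_mul_sum {R M ι : Type*} [CommRing R] [Fintype R] [CommRing M]
    [Fintype ι] [DecidableEq ι] (ψ : AddChar R M) (c : R) :
    ∑ v : ι → R, ψ (c * ∑ t, v t) = (∑ a, ψ (a * c)) ^ Fintype.card ι := by
  simp_rw [mul_sum, AddChar.map_sum_eq_prod, mul_comm _ c]
  rw [← Fintype.prod_sum (fun (_ : ι) a => ψ (c * a)), prod_const, card_univ]

theorem Fin.sum_pairwise_mul_cons {R : Type*} [CommSemiring R] {m : ℕ} (x : R)
    (v : Fin m → R) :
    ∑ i : Fin (m + 1), ∑ j : Fin (m + 1),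
        (if i < j then (Fin.cons x v : Fin (m + 1) → R) i * (Fin.cons x v : Fin (m + 1) → R) j
          else 0) =
      x * ∑ t, v t + ∑ i, ∑ j, if i < j then v i * v j else 0 := by
  simp [Fin.sum_univ_succ, Fin.succ_pos, Fin.succ_lt_succ_iff, mul_sum]

theorem PhiCHSH_succ_apply (d m : ℕ) [NeZero d] (k x : ZMod d) (v : Fin m → ZMod d) :
    PhiCHSH d (m + 1) k x v = 1 / (d : ℂ) ^ (m + 1) *
      ZMod.stdAddChar (k * (x * ∑ t, v t + ∑ i, ∑ j, if i < j then v i * v j else 0)) := by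
  have hcons (i : Fin (m + 1)) :
      (if h : (i : ℕ) = 0 then x else v ⟨(i : ℕ) - 1, by have := i.isLt; omega⟩) =
      (Fin.cons x v : Fin (m + 1) → ZMod d) i := by
    refine Fin.cases ?_ (fun t => ?_) i <;> simp
  simp only [PhiCHSH, of_apply, hcons, Fin.sum_pairwise_mul_cons, zetaPow_eq_stdAddChar]

theorem PhiCHSH_mul_conjTranspose_apply (d m : ℕ) [NeZero d] (k x y : ZMod d) :
    (PhiCHSH d (m + 1) k * (PhiCHSH d (m + 1) k)ᴴ) x y =
      (1 / (d : ℂ) ^ (m + 1)) ^ 2 * (∑ a, ZMod.stdAddChar (a * (k * (x - y)))) ^ m := by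
  have hterm (v : Fin m → ZMod d) :
      PhiCHSH d (m + 1) k x v * star (PhiCHSH d (m + 1) k y v) =
        (1 / (d : ℂ) ^ (m + 1)) ^ 2 * ZMod.stdAddChar (k * (x - y) * ∑ t, v t) := by
    simp only [PhiCHSH_succ_apply, star_mul', Complex.star_def, ← AddChar.map_neg_eq_conj,
      map_div₀, map_one, map_pow, Complex.conj_natCast]
    rw [mul_mul_mul_comm, ← AddChar.map_add_eq_mul, ← sq]
    ring_nf
  have hsum := AddChar.sum_pi_apply_mul_sum (ι := Fin m) ZMod.stdAddChar (k * (x - y))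
  rw [Fintype.card_fin] at hsum
  rw [mul_apply, ← hsum, mul_sum]
  exact Finset.sum_congr rfl fun v _ => hterm v

theorem PhiCHSH_mul_conjTranspose {d n : ℕ} [NeZero d] (hd : d.Prime) (hn : 2 ≤ n) {k : ZMod d}
    (hk : k ≠ 0) :
    PhiCHSH d n k * (PhiCHSH d n k)ᴴ = ((1 : ℂ) / (d : ℂ) ^ (n + 1)) • 1 := by
  have : Fact d.Prime := ⟨hd⟩
  obtain ⟨m, rfl⟩ : ∃ m, n = m + 1 := ⟨n - 1, by omega⟩
  ext x y
  rw [PhiCHSH_mul_conjTranspose_apply, AddChar.sum_mulShift _ (ZMod.isPrimitive_stdAddChar d)]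
  by_cases hxy : x = y
  · have hd0 : (d : ℂ) ≠ 0 := NeZero.ne _
    simp only [hxy, sub_self, mul_zero, if_true, ZMod.card, Matrix.smul_apply, one_apply_eq,
      smul_eq_mul, mul_one]
    field_simp
    ring
  · have hc : k * (x - y) ≠ 0 := mul_ne_zero hk (sub_ne_zero.mpr hxy)
    simp [hc, hxy, show m ≠ 0 by omega]

/-- For `d` prime and `n ≥ 2`, the CHSH game matrices satisfy
`Φ_k Φ_k† = (1/d^{n+1}) I_d`, hence `‖Φ_k‖ = 1/√(d^{n+1})`. -/
theorem chsh_game_matrix_norm (d n : ℕ) [NeZero d] (hd : d.Prime) (hn : 2 ≤ n)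
    (k : ZMod d) (hk : k ≠ 0) :
    PhiCHSH d n k * (PhiCHSH d n k)ᴴ = ((1 : ℂ) / (d : ℂ) ^ (n + 1)) • 1 ∧
    matOpNorm (PhiCHSH d n k) = 1 / Real.sqrt ((d : ℝ) ^ (n + 1)) := by
  have hgram := PhiCHSH_mul_conjTranspose hd hn hk
  refine ⟨hgram, ?_⟩
  have hgram' : PhiCHSH d n k * (PhiCHSH d n k)ᴴ = ((1 / (d : ℝ) ^ (n + 1) : ℝ) : ℂ) • 1 := by
    rw [hgram]; push_cast; rfl
  rw [matOpNorm_eq_sqrt_of_mul_conjTranspose_eq_smul_one _ (by positivity) hgram',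
    one_div, Real.sqrt_inv, one_div]
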